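/- The many-one semilattice embeds into the Weihrauch degrees: fix Turing-incomparable p, q ∈ ℕ^ℕ, and for A ⊆ ℕ define m_A : ℕ → {p,q} by m_A(n) = p iff n ∈ A; then A ≤_m B if and only if m_A ≤_W m_B, and m_{A⊕B} ≡_W m_A ⊔ m_B. -/

import Mathlib

open scoped Classical

/-! ## Basic notions of Weihrauch complexity -/

/-- The finite prefix of length `m` of a point of Baire space, as a list. -/
def pref (p : ℕ → ℕ) (m : ℕ) : List ℕ := List.ofFn (fun i : Fin m => p i)

/-- Type-2 computability of a partial function on Baire space, defined via monotone
computable word functions producing longer and longer prefixes of the output. -/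
def BaireComputable (F : (ℕ → ℕ) →. (ℕ → ℕ)) : Prop :=
  ∃ ψ : List ℕ → List ℕ, Computable ψ ∧
    (∀ u v : List ℕ, u <+: v → ψ u <+: ψ v) ∧
    ∀ p q, q ∈ F p → ∀ n, ∃ m, (ψ (pref p m))[n]? = some (q n)

/-- The interleaving pairing `⟨p,q⟩` on Baire space. -/
def pairB (p q : ℕ → ℕ) : ℕ → ℕ := fun n => if n % 2 = 0 then p (n / 2) else q (n / 2)

def evenPart (r : ℕ → ℕ) : ℕ → ℕ := fun n => r (2 * n)

def oddPart (r : ℕ → ℕ) : ℕ → ℕ := fun n => r (2 * n + 1)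

/-- The `i`-th component of the countable tupling `⟨p₀,p₁,…⟩⟨i,k⟩ = pᵢ(k)`
(using the Cantor pairing). -/
def proj (r : ℕ → ℕ) (i : ℕ) : ℕ → ℕ := fun k => r (Nat.pair i k)

/-- A represented space: a set `X` together with a surjective partial map
from Baire space onto `X`. -/
structure RepSp (X : Type*) where
  δ : (ℕ → ℕ) →. X
  surj : ∀ x : X, ∃ p, x ∈ δ p

theorem mem_part_mk {α : Type*} {D : Prop} {g : D → α} {a : α} (h : D) (e : g h = a) :
    a ∈ Part.mk D g := Part.mem_mk_iff.mpr ⟨h, e⟩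

/-- The identity representation of Baire space. -/
def repBaire : RepSp (ℕ → ℕ) where
  δ := fun p => Part.some p
  surj := fun p => ⟨p, Part.mem_some p⟩

/-- The standard representation of the natural numbers. -/
def repNat : RepSp ℕ where
  δ := fun p => Part.some (p 0)
  surj := fun n => ⟨fun _ => n, Part.mem_some n⟩

/-- `F` is a realizer of the problem `f :⊆ X ⇉ Y` (a problem is a multi-valued
function `f : X → Set Y`, whose domain is the set of `x` with `f x` nonempty). -/
def Realizes {X Y : Type*} (δX : RepSp X) (δY : RepSp Y)
    (f : X → Set Y) (F : (ℕ → ℕ) →. (ℕ → ℕ)) : Prop :=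
  ∀ p x, x ∈ δX.δ p → (f x).Nonempty → ∃ q ∈ F p, ∃ y ∈ δY.δ q, y ∈ f x

/-- Weihrauch reducibility: `f ≤_W g` iff there are computable `H, K` such that
`p ↦ H⟨p, G(K(p))⟩` realizes `f` whenever `G` realizes `g`. -/
def WRed {X Y Z W : Type*} (δX : RepSp X) (δY : RepSp Y) (δZ : RepSp Z) (δW : RepSp W)
    (f : X → Set Y) (g : Z → Set W) : Prop :=
  ∃ H K : (ℕ → ℕ) →. (ℕ → ℕ), BaireComputable H ∧ BaireComputable K ∧
    ∀ G : (ℕ → ℕ) →. (ℕ → ℕ), Realizes δZ δW g G →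
      Realizes δX δY f
        (fun p => (K p).bind fun r => (G r).bind fun q => H (pairB p q))

/-- Strong Weihrauch reducibility: `f ≤_sW g` iff there are computable `H, K`
such that `H ∘ G ∘ K` realizes `f` whenever `G` realizes `g`. -/
def SWRed {X Y Z W : Type*} (δX : RepSp X) (δY : RepSp Y) (δZ : RepSp Z) (δW : RepSp W)
    (f : X → Set Y) (g : Z → Set W) : Prop :=
  ∃ H K : (ℕ → ℕ) →. (ℕ → ℕ), BaireComputable H ∧ BaireComputable K ∧
    ∀ G : (ℕ → ℕ) →. (ℕ → ℕ), Realizes δZ δW g G →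
      Realizes δX δY f (fun p => (K p).bind fun r => (G r).bind fun q => H q)

/-- Weihrauch equivalence. -/
def WEquiv {X Y Z W : Type*} (δX : RepSp X) (δY : RepSp Y) (δZ : RepSp Z) (δW : RepSp W)
    (f : X → Set Y) (g : Z → Set W) : Prop :=
  WRed δX δY δZ δW f g ∧ WRed δZ δW δX δY g f

/-- Strong Weihrauch equivalence. -/
def SWEquiv {X Y Z W : Type*} (δX : RepSp X) (δY : RepSp Y) (δZ : RepSp Z) (δW : RepSp W)
    (f : X → Set Y) (g : Z → Set W) : Prop :=
  SWRed δX δY δZ δW f g ∧ SWRed δZ δW δX δY g f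

/-- The identity problem on Baire space. -/
def idProblem : (ℕ → ℕ) → Set (ℕ → ℕ) := fun p => {p}

/-! ## Constructions on representations and problems -/

/-- Representation of the product of two represented spaces. -/
def prodRep {X Z : Type*} (δX : RepSp X) (δZ : RepSp Z) : RepSp (X × Z) where
  δ := fun r => (δX.δ (evenPart r)).bind fun x => (δZ.δ (oddPart r)).map fun z => (x, z)
  surj := by
    intro xz
    obtain ⟨p, hp⟩ := δX.surj xz.1
    obtain ⟨q, hq⟩ := δZ.surj xz.2
    have he : evenPart (pairB p q) = p := by
      funext n
      have h1 : (2 * n) % 2 = 0 := by omega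
      have h2 : (2 * n) / 2 = n := by omega
      simp [evenPart, pairB, h1, h2]
    have ho : oddPart (pairB p q) = q := by
      funext n
      have h1 : ¬((2 * n + 1) % 2 = 0) := by omega
      have h2 : (2 * n + 1) / 2 = n := by omega
      simp [oddPart, pairB, h1, h2]
    refine ⟨pairB p q, Part.mem_bind_iff.mpr ⟨xz.1, by rw [he]; exact hp,
      (Part.mem_map_iff _).mpr ⟨xz.2, by rw [ho]; exact hq, rfl⟩⟩⟩

/-- The product `f × g` of two problems. -/
def prodProblem {X Y Z W : Type*} (f : X → Set Y) (g : Z → Set W) :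
    X × Z → Set (Y × W) :=
  fun xz => f xz.1 ×ˢ g xz.2

/-- Representation of the disjoint union of two represented spaces. -/
def sumRep {X Z : Type*} (δX : RepSp X) (δZ : RepSp Z) : RepSp (X ⊕ Z) where
  δ := fun r =>
    if r 0 = 0 then (δX.δ fun n => r (n + 1)).map Sum.inl
    else if r 0 = 1 then (δZ.δ fun n => r (n + 1)).map Sum.inr
    else Part.none
  surj := by
    rintro (x | z)
    · obtain ⟨p, hp⟩ := δX.surj x
      refine ⟨fun n => Nat.casesOn n 0 p, ?_⟩
      show Sum.inl x ∈ (δX.δ p).map Sum.inl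
      exact (Part.mem_map_iff _).mpr ⟨x, hp, rfl⟩
    · obtain ⟨p, hp⟩ := δZ.surj z
      refine ⟨fun n => Nat.casesOn n 1 p, ?_⟩
      show Sum.inr z ∈ (δZ.δ p).map Sum.inr
      exact (Part.mem_map_iff _).mpr ⟨z, hp, rfl⟩

/-- The coproduct `f ⊔ g` of two problems. -/
def coprodProblem {X Y Z W : Type*} (f : X → Set Y) (g : Z → Set W) :
    X ⊕ Z → Set (Y ⊕ W)
  | Sum.inl x => Sum.inl '' f x
  | Sum.inr z => Sum.inr '' g z

/-- The meet `f ⊓ g` of two problems. -/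
def meetProblem {X Y Z W : Type*} (f : X → Set Y) (g : Z → Set W) :
    X × Z → Set (Y ⊕ W) :=
  fun xz => Sum.inl '' f xz.1 ∪ Sum.inr '' g xz.2

/-- Representation of the space of sequences `X^ℕ` via the countable tupling. -/
noncomputable def seqRep {X : Type*} (δX : RepSp X) : RepSp (ℕ → X) where
  δ := fun r => Part.mk (∀ i : ℕ, ∃ x, x ∈ δX.δ (proj r i))
    (fun h i => Classical.choose (h i))
  surj := by
    intro x
    choose p hp using fun i => δX.surj (x i)
    refine ⟨fun m => p (Nat.unpair m).1 (Nat.unpair m).2, ?_⟩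
    have hproj : ∀ i, proj (fun m => p (Nat.unpair m).1 (Nat.unpair m).2) i = p i := by
      intro i; funext k; simp [proj]
    have hdom : ∀ i : ℕ, ∃ y, y ∈ δX.δ (proj (fun m => p (Nat.unpair m).1 (Nat.unpair m).2) i) :=
      fun i => ⟨x i, by rw [hproj i]; exact hp i⟩
    refine mem_part_mk hdom ?_
    funext i
    exact Part.mem_unique (Classical.choose_spec (hdom i)) (by rw [hproj i]; exact hp i)

/-- The parallelization `f̂` of a problem. -/
def parallelProblem {X Y : Type*} (f : X → Set Y) : (ℕ → X) → Set (ℕ → Y) :=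
  fun x => {y | ∀ i, y i ∈ f (x i)}

/-- Representation of the finite power `Xⁿ` via the countable tupling. -/
noncomputable def finProdRep (n : ℕ) {X : Type*} (δX : RepSp X) : RepSp (Fin n → X) where
  δ := fun r => Part.mk (∀ i : Fin n, ∃ x, x ∈ δX.δ (proj r i))
    (fun h i => Classical.choose (h i))
  surj := by
    intro x
    choose p hp using fun i => δX.surj (x i)
    classical
    refine ⟨fun m => if h : (Nat.unpair m).1 < n then p ⟨_, h⟩ (Nat.unpair m).2 else 0, ?_⟩
    have hproj : ∀ i : Fin n,
        proj (fun m => if h : (Nat.unpair m).1 < n then p ⟨_, h⟩ (Nat.unpair m).2 else 0) i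
          = p i := by
      intro i; funext k; simp [proj, i.isLt]
    have hdom : ∀ i : Fin n, ∃ y, y ∈ δX.δ
        (proj (fun m => if h : (Nat.unpair m).1 < n then p ⟨_, h⟩ (Nat.unpair m).2 else 0) i) :=
      fun i => ⟨x i, by rw [hproj i]; exact hp i⟩
    refine mem_part_mk hdom ?_
    funext i
    exact Part.mem_unique (Classical.choose_spec (hdom i)) (by rw [hproj i]; exact hp i)

/-- The `n`-fold product `fⁿ` of a problem with itself. -/
def finProdProblem (n : ℕ) {X Y : Type*} (f : X → Set Y) :
    (Fin n → X) → Set (Fin n → Y) :=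
  fun x => {y | ∀ i, y i ∈ f (x i)}

/-- Representation of the space `X*` of words over `X`. -/
noncomputable def starRep {X : Type*} (δX : RepSp X) : RepSp (Σ n : ℕ, Fin n → X) where
  δ := fun r => Part.mk (∀ i : Fin (r 0), ∃ x, x ∈ δX.δ (proj (fun m => r (m + 1)) i))
    (fun h => ⟨r 0, fun i => Classical.choose (h i)⟩)
  surj := by
    rintro ⟨n, x⟩
    choose p hp using fun i => δX.surj (x i)
    classical
    have hproj : ∀ i : Fin n,
        proj (fun m' => if h : (Nat.unpair m').1 < n then p ⟨_, h⟩ (Nat.unpair m').2 else 0) i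
          = p i := by
      intro i; funext k; simp [proj, i.isLt]
    have hdom : ∀ i : Fin n, ∃ y, y ∈ δX.δ
        (proj (fun m' => if h : (Nat.unpair m').1 < n then p ⟨_, h⟩ (Nat.unpair m').2 else 0) i) :=
      fun i => ⟨x i, by rw [hproj i]; exact hp i⟩
    refine ⟨fun m => Nat.casesOn m n
      (fun m' => if h : (Nat.unpair m').1 < n then p ⟨_, h⟩ (Nat.unpair m').2 else 0),
      Part.mem_mk_iff.mpr ⟨hdom, ?_⟩⟩
    have hx : (fun i : Fin n => Classical.choose (hdom i)) = x := funext fun i =>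
      Part.mem_unique (Classical.choose_spec (hdom i)) (by rw [hproj i]; exact hp i)
    exact congrArg (Sigma.mk n) hx

/-- The finite parallelization `f*` of a problem. -/
def starProblem {X Y : Type*} (f : X → Set Y) :
    (Σ n : ℕ, Fin n → X) → Set (Σ n : ℕ, Fin n → Y) :=
  fun x => {y | ∃ e : x.1 = y.1, ∀ i : Fin x.1, y.2 (Fin.cast e i) ∈ f (x.2 i)}

/-- Representation of a countable disjoint union of represented spaces. -/
def csumRep {Z : ℕ → Type*} (δZ : ∀ i, RepSp (Z i)) : RepSp (Σ i, Z i) where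
  δ := fun r => ((δZ (r 0)).δ (fun n => r (n + 1))).map fun z => ⟨r 0, z⟩
  surj := by
    rintro ⟨i, z⟩
    obtain ⟨p, hp⟩ := (δZ i).surj z
    exact ⟨fun n => Nat.casesOn n i p, (Part.mem_map_iff _).mpr ⟨z, hp, rfl⟩⟩

/-- The countable coproduct `⊔ᵢ gᵢ` of a sequence of problems. -/
def csumProblem {Z W : ℕ → Type*} (g : ∀ i, Z i → Set (W i)) :
    (Σ i, Z i) → Set (Σ i, W i) :=
  fun x => Sigma.mk x.1 '' g x.1 x.2

/-! ## Limits and jumps -/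

/-- The limit map on Baire space, as a (single-valued) problem:
`lim⟨p₀,p₁,…⟩` is the pointwise limit of the sequence `(pₙ)ₙ`. -/
def limProblem : (ℕ → ℕ) → Set (ℕ → ℕ) :=
  fun r => {q | ∀ n, ∃ N, ∀ m, N ≤ m → proj r m n = q n}

/-- The limit map on Baire space as a partial (single-valued) function. -/
noncomputable def limP : (ℕ → ℕ) →. (ℕ → ℕ) :=
  fun r => Part.mk (∀ n, ∃ N, ∀ m, N ≤ m → proj r m n = proj r N n)
    (fun h n => proj r (Classical.choose (h n)) n)

/-- The jump `(X′, δ′)` of a represented space: `δ′ := δ ∘ lim`. -/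
noncomputable def jumpRep {X : Type*} (δ : RepSp X) : RepSp X where
  δ := fun p => (limP p).bind δ.δ
  surj := by
    intro x
    obtain ⟨p, hp⟩ := δ.surj x
    refine ⟨fun m => p (Nat.unpair m).2, Part.mem_bind_iff.mpr ⟨p, ?_, hp⟩⟩
    have hproj : ∀ m, proj (fun m => p (Nat.unpair m).2) m = p := by
      intro m; funext k; simp [proj]
    have hdom : ∀ n, ∃ N, ∀ m, N ≤ m →
        proj (fun m => p (Nat.unpair m).2) m n = proj (fun m => p (Nat.unpair m).2) N n :=
      fun n => ⟨0, fun m _ => by rw [hproj m, hproj 0]⟩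
    refine mem_part_mk hdom ?_
    funext n
    rw [hproj]

/-! ## Choice problems -/

/-- The representation of subsets of `ℕ` by enumerations of their complements:
`p` is a name of `A` iff `p` enumerates (via `p m = n + 1`) exactly the `n ∉ A`. -/
def enumNegRep : RepSp (Set ℕ) where
  δ := fun p => Part.some {n | ∀ m, p m ≠ n + 1}
  surj := by
    intro S
    by_cases h : Sᶜ.Nonempty
    · obtain ⟨f, hf⟩ := (Set.to_countable Sᶜ).exists_eq_range h
      refine ⟨fun m => f m + 1, Part.mem_some_iff.mpr ?_⟩
      ext n
      simp only [Set.mem_setOf_eq]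
      constructor
      · intro hn m hm
        have hfm : f m ∈ Sᶜ := by rw [hf]; exact ⟨m, rfl⟩
        have hfmn : f m = n := by omega
        rw [hfmn] at hfm
        exact hfm hn
      · intro hn
        by_contra hS
        have hmem : n ∈ Sᶜ := hS
        rw [hf] at hmem
        obtain ⟨m, hm⟩ := hmem
        exact hn m (by omega)
    · refine ⟨fun _ => 0, Part.mem_some_iff.mpr ?_⟩
      have hS : S = Set.univ := by
        rw [← compl_compl S, Set.not_nonempty_iff_eq_empty.mp h, Set.compl_empty]
      rw [hS]
      ext n
      simp

/-- Choice on the natural numbers: given (a name of) a nonempty set `A ⊆ ℕ`,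
find an element of `A`. -/
def CNat : Set ℕ → Set ℕ := fun A => A

/-- Choice on the finite set `{0, …, k-1}`. -/
def CFin (k : ℕ) : Set ℕ → Set ℕ := fun A => {n | n ∈ A ∧ A ⊆ Set.Iio k}

/-- The limited principle of omniscience as a problem. -/
noncomputable def LPOProblem : (ℕ → ℕ) → Set ℕ :=
  fun p => {if ∃ k, p k = 0 then 1 else 0}


/-- Restriction of a problem on Baire space to a set `A`. -/
def restrictProblem (F : (ℕ → ℕ) → Set (ℕ → ℕ)) (A : Set (ℕ → ℕ)) :
    (ℕ → ℕ) → Set (ℕ → ℕ) :=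
  fun p => {q | q ∈ F p ∧ p ∈ A}

/-- A problem is a fractal if it has a representative on Baire space all of whose
restrictions to clopen sets meeting its domain are Weihrauch equivalent to it. -/
def Fractal {X Y : Type*} (δX : RepSp X) (δY : RepSp Y) (f : X → Set Y) : Prop :=
  ∃ F : (ℕ → ℕ) → Set (ℕ → ℕ),
    WEquiv repBaire repBaire δX δY F f ∧
    ∀ A : Set (ℕ → ℕ), IsClopen A → (A ∩ {p | (F p).Nonempty}).Nonempty →
      WEquiv repBaire repBaire repBaire repBaire (restrictProblem F A) F

/-- A problem `f` is densely realized if for every name `p` of an admissible instance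
the set of names of solutions is dense in the domain of the output representation. -/
def DenselyRealized {X Y : Type*} (δX : RepSp X) (δY : RepSp Y) (f : X → Set Y) : Prop :=
  ∀ p, ∀ x ∈ δX.δ p, (f x).Nonempty →
    {q : ℕ → ℕ | (δY.δ q).Dom} ⊆ closure {q : ℕ → ℕ | ∃ y ∈ δY.δ q, y ∈ f x}

/-- Turing reducibility on Baire space: `a` is computable from `b`. -/
def TRed (a b : ℕ → ℕ) : Prop := ∃ F, BaireComputable F ∧ a ∈ F b

/-- The two-point space `{p, q}` represented by the identity. -/
def pqRep (p q : ℕ → ℕ) : RepSp {r : ℕ → ℕ // r = p ∨ r = q} where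
  δ := fun r => Part.mk (r = p ∨ r = q) (fun h => ⟨r, h⟩)
  surj := fun x => ⟨x.1, Part.mem_mk_iff.mpr ⟨x.2, rfl⟩⟩

/-- The problem `m_A` associated with a set `A ⊆ ℕ`. -/
noncomputable def mProblem (p q : ℕ → ℕ) (A : Set ℕ) :
    ℕ → Set {r : ℕ → ℕ // r = p ∨ r = q} :=
  fun n => {y | y.1 = if n ∈ A then p else q}

/-- The join `A ⊕ B` of two sets of natural numbers. -/
def mJoin (A B : Set ℕ) : Set ℕ :=
  {k | (k % 2 = 0 ∧ k / 2 ∈ A) ∨ (k % 2 = 1 ∧ k / 2 ∈ B)}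

/-- The cardinality `#f` of a problem: the supremum of the cardinalities of sets
`M ⊆ dom f` whose images under `f` are pairwise disjoint. -/
noncomputable def problemCard {X Y : Type} (f : X → Set Y) : Cardinal :=
  sSup {c | ∃ M : Set X, (∀ x ∈ M, (f x).Nonempty) ∧ M.PairwiseDisjoint f ∧
    c = Cardinal.mk M}

/-- Computability of a problem: it has a computable realizer. -/
def ComputableProblem {X Y : Type*} (δX : RepSp X) (δY : RepSp Y) (f : X → Set Y) : Prop :=
  ∃ F, BaireComputable F ∧ Realizes δX δY f F

/-- The minimum function on Baire space. -/
def minProblem : (ℕ → ℕ) → Set ℕ :=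
  fun p => {n | n ∈ Set.range p ∧ ∀ m, n ≤ p m}

/-- The complementary minimum function `minᶜ`. -/
def mincProblem : (ℕ → ℕ) → Set ℕ :=
  fun p => {n | (∀ m, p m ≠ n) ∧ ∀ j, j < n → ∃ m, p m = j}

/-- The maximum function on Baire space (defined on bounded sequences). -/
def maxProblem : (ℕ → ℕ) → Set ℕ :=
  fun p => {n | n ∈ Set.range p ∧ ∀ m, p m ≤ n}

/-!
A many-one reduction `f` of `A` to `B` yields the Weihrauch reduction that hands `f n` to
`m_B` and passes its answer on unchanged. Conversely, let `K, H` reduce `m_A` to `m_B`, and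
run them against the realizer of `m_B` that answers `p` or `q` from the name of its instance.
On input `n`, the map `H` must turn `⟨n, y⟩`, with `y ∈ {p, q}` the answer of `m_B` at
`K(n)(0)`, into the answer `z ∈ {p, q}` of `m_A` at `n`; then `z` is computable from `y`, so
`z = y` by incomparability, i.e. `n ∈ A ↔ K(n)(0) ∈ B`, and `n ↦ K(n)(0)` is computable. The
two reductions between `m_{A⊕B}` and `m_A ⊔ m_B` only translate `k` to and from the pair
`(k mod 2, k div 2)` and leave the answer untouched.
-/

section BaireSpace

theorem pref_eq_map_range (r : ℕ → ℕ) (m : ℕ) : pref r m = (List.range m).map r := by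
  rw [pref, List.ofFn_eq_map, ← List.map_coe_finRange_eq_range, List.map_map]
  rfl

@[simp]
theorem length_pref (r : ℕ → ℕ) (m : ℕ) : (pref r m).length = m := by
  simp [pref]

theorem getElem?_pref (r : ℕ → ℕ) {i m : ℕ} (h : i < m) : (pref r m)[i]? = some (r i) := by
  simp [pref_eq_map_range, h]

theorem getD_pref (r : ℕ → ℕ) {i m : ℕ} (h : i < m) : (pref r m).getD i 0 = r i := by
  simp [List.getD_eq_getElem?_getD, getElem?_pref r h]

theorem take_pref (r : ℕ → ℕ) {k m : ℕ} (h : k ≤ m) : (pref r m).take k = pref r k := by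
  simp [pref_eq_map_range, ← List.map_take, List.take_range, h]

theorem pref_prefix_pref (r : ℕ → ℕ) {m m' : ℕ} (h : m ≤ m') : pref r m <+: pref r m' := by
  rw [← take_pref r h]
  exact List.take_prefix _ _

@[simp]
theorem oddPart_pairB (a b : ℕ → ℕ) : oddPart (pairB a b) = b := by
  funext k
  simp [oddPart, pairB, Nat.mul_add_div]

end BaireSpace

theorem map_range_prefix_map_range {α : Type*} {a b : ℕ} (h : a ≤ b) {f f' : ℕ → α}
    (hf : ∀ i < a, f i = f' i) : (List.range a).map f <+: (List.range b).map f' := by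
  have he : (List.range a).map f = ((List.range b).map f').take a := by
    rw [← List.map_take, List.take_range, min_eq_left h]
    exact List.map_congr_left fun i hi => hf i (List.mem_range.mp hi)
  rw [he]
  exact List.take_prefix _ _

theorem computable_map_range {α σ : Type*} [Primcodable α] [Primcodable σ] {f : α → ℕ}
    {h : α → ℕ → σ} (hf : Computable f) (hh : Computable₂ h) :
    Computable fun a => (List.range (f a)).map (h a) := by
  refine (Computable.nat_rec hf (Computable.const [])
    (Computable.list_concat.comp (Computable.snd.comp Computable.snd)
      (hh.comp Computable.fst (Computable.fst.comp Computable.snd))).to₂).of_eq fun a => ?_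
  induction f a with
  | zero => rfl
  | succ n ih => simp [ih, List.range_succ]

theorem getElem?_eq_some_of_prefix {α : Type*} {l l' : List α} (h : l <+: l') {k : ℕ} {a : α}
    (hk : l[k]? = some a) : l'[k]? = some a := by
  obtain ⟨t, rfl⟩ := h
  rwa [List.getElem?_append_left (List.getElem?_eq_some_iff.mp hk).1]

section FiniteUse

variable {u : ℕ → ℕ} {g : ℕ → List ℕ → ℕ}

/- For monotone `u`, the digits `i < |v|` with `u i ≤ |v|` form an initial segment, and
`useWord u g v` lists the values `g i (v.take (u i))` on it: the output digits that the
input prefix `v` already determines when digit `i` is `g i` of the first `u i` input digits. -/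
def useLength (u : ℕ → ℕ) (v : List ℕ) : ℕ :=
  Nat.count (fun i => u i ≤ v.length) v.length

def useWord (u : ℕ → ℕ) (g : ℕ → List ℕ → ℕ) (v : List ℕ) : List ℕ :=
  (List.range (useLength u v)).map fun i => g i (v.take (u i))

theorem le_length_of_lt_useLength (hu : Monotone u) {v : List ℕ} {i : ℕ}
    (h : i < useLength u v) : u i ≤ v.length := by
  have hi : Nat.count (fun i => u i ≤ v.length) i < useLength u v :=
    lt_of_le_of_lt (Nat.count_le _) h
  obtain ⟨j, hj, huj⟩ := Nat.exists_of_count_lt_count hi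
  exact (hu (Set.mem_Ico.mp hj).1).trans huj

theorem lt_useLength (hu : Monotone u) {v : List ℕ} {n : ℕ} (hn : n < v.length)
    (hun : u n ≤ v.length) : n < useLength u v := by
  have hall : Nat.count (fun i => u i ≤ v.length) (n + 1) = n + 1 :=
    Nat.count_iff_forall.mpr fun j hj => (hu (Nat.lt_succ_iff.mp hj)).trans hun
  have := Nat.count_monotone (fun i => u i ≤ v.length) (show n + 1 ≤ v.length from hn)
  unfold useLength
  omega

theorem useLength_mono {v w : List ℕ} (h : v <+: w) : useLength u v ≤ useLength u w :=
  (Nat.count_monotone _ h.length_le).trans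
    (Nat.count_mono_left fun _ _ hi => hi.trans h.length_le)

theorem useWord_prefix (hu : Monotone u) {v w : List ℕ} (h : v <+: w) :
    useWord u g v <+: useWord u g w := by
  refine map_range_prefix_map_range (useLength_mono h) fun i hi => ?_
  rw [List.prefix_iff_eq_take.mp h, List.take_take,
    min_eq_left (le_length_of_lt_useLength hu hi)]

theorem useWord_pref (hu : Monotone u) {T : (ℕ → ℕ) → ℕ → ℕ}
    (hT : ∀ r n, T r n = g n (pref r (u n))) (r : ℕ → ℕ) (m : ℕ) :
    useWord u g (pref r m) = pref (T r) (useLength u (pref r m)) := by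
  rw [useWord, pref_eq_map_range (T r)]
  refine List.map_congr_left fun i hi => ?_
  have hle := le_length_of_lt_useLength hu (List.mem_range.mp hi)
  rw [length_pref] at hle
  rw [take_pref r hle, hT]

theorem exists_le_useLength_pref (hu : Monotone u) (r : ℕ → ℕ) (k : ℕ) :
    ∃ m, k ≤ useLength u (pref r m) :=
  ⟨k + 1 + u k, (lt_useLength hu (n := k) (by simp; omega) (by simp)).le⟩

theorem computable_useWord (hu : Primrec u) (hg : Computable₂ g) :
    Computable (useWord u g) := by
  have hlen : Primrec (useLength u) := by
    have hfilter : Primrec fun v : List ℕ =>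
        (List.range v.length).filter fun i => u i ≤ v.length :=
      (PrimrecRel.listFilter (R := fun i n => u i ≤ n)
        (Primrec.nat_le.comp (hu.comp Primrec.fst) Primrec.snd)).comp
        (Primrec.list_range.comp Primrec.list_length) Primrec.list_length
    refine (Primrec.list_length.comp hfilter).of_eq fun v => ?_
    rw [useLength, Nat.count, List.countP_eq_length_filter]
  exact computable_map_range hlen.to_comp
    (hg.comp Computable.snd (Primrec.list_take.comp (hu.comp Primrec.snd) Primrec.fst).to_comp)

theorem baireComputable_of_use {T : (ℕ → ℕ) → ℕ → ℕ} (hu : Primrec u) (hmono : Monotone u)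
    (hg : Computable₂ g) (hT : ∀ r n, T r n = g n (pref r (u n))) :
    BaireComputable fun r => Part.some (T r) := by
  refine ⟨useWord u g, computable_useWord hu hg, fun _ _ => useWord_prefix hmono, ?_⟩
  intro r z hz n
  obtain rfl := Part.mem_some_iff.mp hz
  obtain ⟨m, hm⟩ := exists_le_useLength_pref hmono r (n + 1)
  exact ⟨m, by rw [useWord_pref hmono hT, getElem?_pref _ hm]⟩

theorem BaireComputable.comp_of_use {H : (ℕ → ℕ) →. (ℕ → ℕ)} (hH : BaireComputable H)
    {T : (ℕ → ℕ) → ℕ → ℕ} (hu : Primrec u) (hmono : Monotone u) (hg : Computable₂ g)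
    (hT : ∀ r n, T r n = g n (pref r (u n))) :
    BaireComputable fun r => H (T r) := by
  obtain ⟨ψ, hψ, hψmono, hψH⟩ := hH
  refine ⟨ψ ∘ useWord u g, hψ.comp (computable_useWord hu hg),
    fun _ _ h => hψmono _ _ (useWord_prefix hmono h), fun r z hz n => ?_⟩
  obtain ⟨k, hk⟩ := hψH (T r) z hz n
  obtain ⟨m, hm⟩ := exists_le_useLength_pref hmono r k
  refine ⟨m, ?_⟩
  rw [Function.comp_apply, useWord_pref hmono hT]
  exact getElem?_eq_some_of_prefix (hψmono _ _ (pref_prefix_pref (T r) hm)) hk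

end FiniteUse

section TuringReducibility

theorem tred_refl (a : ℕ → ℕ) : TRed a a :=
  ⟨Part.some, baireComputable_of_use (u := (· + 1)) (g := fun n l => l.getD n 0)
    Primrec.succ (fun _ _ h => Nat.succ_le_succ h)
    ((Primrec.list_getD 0).comp Primrec.snd Primrec.fst).to_comp
    (fun r n => (getD_pref r n.lt_succ_self).symm), Part.mem_some a⟩

theorem tred_of_mem_pairB {H : (ℕ → ℕ) →. (ℕ → ℕ)} (hH : BaireComputable H) {a : ℕ → ℕ}
    (ha : Computable a) {y z : ℕ → ℕ} (hz : z ∈ H (pairB a y)) : TRed z y := by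
  refine ⟨_, hH.comp_of_use (u := fun n => n / 2 + 1)
    (g := fun n l => if n % 2 = 0 then a (n / 2) else l.getD (n / 2) 0) ?_ ?_ ?_ ?_, hz⟩
  · exact Primrec.succ.comp (Primrec.nat_div.comp Primrec.id (Primrec.const 2))
  · exact fun m n h => Nat.succ_le_succ (Nat.div_le_div_right h)
  · have hhalf : Primrec fun x : ℕ × List ℕ => x.1 / 2 :=
      Primrec.nat_div.comp Primrec.fst (Primrec.const 2)
    refine (Computable.cond
      (Primrec.eq.comp (Primrec.nat_mod.comp Primrec.fst (Primrec.const 2))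
        (Primrec.const 0)).decide.to_comp
      (ha.comp hhalf.to_comp)
      ((Primrec.list_getD 0).comp Primrec.snd hhalf).to_comp).of_eq fun x => ?_
    simp only [Bool.cond_decide]
  · intro r n
    simp only [pairB]
    split_ifs
    · rfl
    · exact (getD_pref r (Nat.lt_succ_self _)).symm


theorem eq_of_mem_pairB_of_incomparable {p q : ℕ → ℕ} (hpq : ¬ TRed p q ∧ ¬ TRed q p)
    {H : (ℕ → ℕ) →. (ℕ → ℕ)} (hH : BaireComputable H) {a : ℕ → ℕ} (ha : Computable a)
    {y z : ℕ → ℕ} (hy : y = p ∨ y = q) (hz : z = p ∨ z = q) (h : z ∈ H (pairB a y)) :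
    z = y := by
  have hzy := tred_of_mem_pairB hH ha h
  rcases hy with rfl | rfl <;> rcases hz with rfl | rfl
  exacts [rfl, absurd hzy hpq.2, absurd hzy hpq.1, rfl]

end TuringReducibility

theorem BaireComputable.exists_partrec_const {K : (ℕ → ℕ) →. (ℕ → ℕ)} (hK : BaireComputable K) :
    ∃ F : ℕ → ℕ →. ℕ, Partrec₂ F ∧ ∀ n r, r ∈ K (fun _ => n) → ∀ i, r i ∈ F n i := by
  obtain ⟨ψ, hψ, hψmono, hψK⟩ := hK
  refine ⟨fun n i => Nat.rfindOpt fun m => (ψ (pref (fun _ => n) m))[i]?, ?_, ?_⟩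
  · have hpref : Primrec₂ fun n m : ℕ => pref (fun _ => n) m :=
      (Primrec.list_map (Primrec.list_range.comp Primrec.snd)
        (Primrec.fst.comp Primrec.fst).to₂).of_eq fun x => (pref_eq_map_range _ _).symm
    exact Partrec.rfindOpt (Computable.list_getElem?.comp
      (hψ.comp (hpref.to_comp.comp (Computable.fst.comp Computable.fst) Computable.snd))
      (Computable.snd.comp Computable.fst))
  · intro n r hr i
    obtain ⟨m, hm⟩ := hψK _ r hr i
    refine (Nat.rfindOpt_mono fun {a m m'} hle ha => ?_).mpr ⟨m, hm⟩
    exact getElem?_eq_some_of_prefix (hψmono _ _ (pref_prefix_pref _ hle)) ha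

theorem manyOneReducible_of_partrec {α β : Type*} [Primcodable α] [Primcodable β]
    {P : α → Prop} {Q : β → Prop} {F : α →. β} (hF : Partrec F)
    (h : ∀ a, ∃ b ∈ F a, (P a ↔ Q b)) : P ≤₀ Q := by
  have hdom : ∀ a, (F a).Dom := fun a => (h a).elim fun _ hb => Part.dom_iff_mem.mpr ⟨_, hb.1⟩
  refine ⟨fun a => (F a).get (hdom a), hF.of_eq_tot fun a => Part.get_mem _, fun a => ?_⟩
  obtain ⟨b, hb, hPQ⟩ := h a
  dsimp only
  rwa [Part.get_eq_of_mem hb]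

section RepresentedSpaces

variable {X Y Z W : Type*} {p q : ℕ → ℕ}

@[simp]
theorem mem_repNat_iff {r : ℕ → ℕ} {n : ℕ} : n ∈ repNat.δ r ↔ n = r 0 :=
  Part.mem_some_iff

@[simp]
theorem mem_pqRep_iff {r : ℕ → ℕ} {y : {r : ℕ → ℕ // r = p ∨ r = q}} :
    y ∈ (pqRep p q).δ r ↔ y.1 = r := by
  simp only [pqRep, Part.mem_mk_iff, Subtype.ext_iff]
  exact ⟨fun h => h.2.symm, fun h => ⟨h ▸ y.2, h.symm⟩⟩

@[simp]
theorem inl_mem_sumRep_iff {δX : RepSp X} {δZ : RepSp Z} {r : ℕ → ℕ} {x : X} :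
    Sum.inl x ∈ (sumRep δX δZ).δ r ↔ r 0 = 0 ∧ x ∈ δX.δ fun n => r (n + 1) := by
  simp only [sumRep]
  split_ifs <;> simp_all

@[simp]
theorem inr_mem_sumRep_iff {δX : RepSp X} {δZ : RepSp Z} {r : ℕ → ℕ} {z : Z} :
    Sum.inr z ∈ (sumRep δX δZ).δ r ↔ r 0 = 1 ∧ z ∈ δZ.δ fun n => r (n + 1) := by
  simp only [sumRep]
  split_ifs <;> simp_all

theorem mem_sumRep_repNat_iff {s : ℕ → ℕ} {x : ℕ ⊕ ℕ} :
    x ∈ (sumRep repNat repNat).δ s ↔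
      s 0 = Sum.elim (fun _ => 0) (fun _ => 1) x ∧ Sum.elim id id x = s 1 := by
  cases x <;> simp

theorem wred_of_total {δX : RepSp X} {δY : RepSp Y} {δZ : RepSp Z} {δW : RepSp W}
    {f : X → Set Y} {g : Z → Set W} {k h : (ℕ → ℕ) → (ℕ → ℕ)}
    (hk : BaireComputable fun r => Part.some (k r))
    (hh : BaireComputable fun r => Part.some (h r))
    (hred : ∀ r x, x ∈ δX.δ r → (f x).Nonempty → ∃ z ∈ δZ.δ (k r), (g z).Nonempty ∧
      ∀ t, (∃ w ∈ δW.δ t, w ∈ g z) → ∃ y ∈ δY.δ (h (pairB r t)), y ∈ f x) :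
    WRed δX δY δZ δW f g := by
  refine ⟨_, _, hh, hk, fun G hG r x hx hfx => ?_⟩
  obtain ⟨z, hz, hgz, hsol⟩ := hred r x hx hfx
  obtain ⟨t, ht, hw⟩ := hG (k r) z hz hgz
  exact ⟨h (pairB r t), Part.mem_bind_iff.mpr ⟨k r, Part.mem_some _,
    Part.mem_bind_iff.mpr ⟨t, ht, Part.mem_some _⟩⟩, hsol t hw⟩

theorem coprodProblem_nonempty {f : X → Set Y} {g : Z → Set W} (hf : ∀ x, (f x).Nonempty)
    (hg : ∀ z, (g z).Nonempty) (x : X ⊕ Z) : (coprodProblem f g x).Nonempty := by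
  cases x <;> simp [coprodProblem, hf, hg]

end RepresentedSpaces

section ManyOneProblems

variable {p q : ℕ → ℕ}

theorem mProblem_nonempty (A : Set ℕ) (n : ℕ) : (mProblem p q A n).Nonempty :=
  ⟨⟨_, ite_eq_or_eq _ _ _⟩, rfl⟩

theorem exists_mem_pqRep_mem_mProblem_iff {A : Set ℕ} {n : ℕ} {r : ℕ → ℕ} :
    (∃ y ∈ (pqRep p q).δ r, y ∈ mProblem p q A n) ↔ r = if n ∈ A then p else q := by
  constructor
  · rintro ⟨y, hy, hyA⟩
    rw [← mem_pqRep_iff.mp hy]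
    exact hyA
  · rintro rfl
    exact ⟨⟨_, ite_eq_or_eq _ _ _⟩, mem_pqRep_iff.mpr rfl, rfl⟩

theorem exists_mem_sumRep_mem_coprodProblem_iff {A B : Set ℕ} {x : ℕ ⊕ ℕ} {t : ℕ → ℕ} :
    (∃ w ∈ (sumRep (pqRep p q) (pqRep p q)).δ t,
        w ∈ coprodProblem (mProblem p q A) (mProblem p q B) x) ↔
      t 0 = Sum.elim (fun _ => 0) (fun _ => 1) x ∧
        (fun n => t (n + 1)) = if Sum.elim (· ∈ A) (· ∈ B) x then p else q := by
  rcases x with n | n <;>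
  · constructor
    · rintro ⟨_, ht, y, hy, rfl⟩
      simp only [inl_mem_sumRep_iff, inr_mem_sumRep_iff, mem_pqRep_iff] at ht
      exact ⟨ht.1, ht.2.symm.trans hy⟩
    · rintro ⟨h0, htail⟩
      refine ⟨_, ?_, ⟨_, ite_eq_or_eq _ _ _⟩, rfl, rfl⟩
      simp only [inl_mem_sumRep_iff, inr_mem_sumRep_iff, mem_pqRep_iff]
      exact ⟨h0, htail.symm⟩

theorem realizes_mProblem (A : Set ℕ) :
    Realizes repNat (pqRep p q) (mProblem p q A)
      fun r => Part.some (if r 0 ∈ A then p else q) := by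
  rintro r n hn -
  rw [mem_repNat_iff.mp hn]
  exact ⟨_, Part.mem_some _, exists_mem_pqRep_mem_mProblem_iff.mpr rfl⟩

theorem mem_mJoin_natSumNatEquivNat {A B : Set ℕ} (x : ℕ ⊕ ℕ) :
    Equiv.natSumNatEquivNat x ∈ mJoin A B ↔ Sum.elim (· ∈ A) (· ∈ B) x := by
  cases x <;> simp [mJoin, Nat.mul_add_div]

end ManyOneProblems

section ComputableMaps

theorem baireComputable_const_head {f : ℕ → ℕ} (hf : Computable f) :
    BaireComputable fun r => Part.some fun _ => f (r 0) :=
  baireComputable_of_use (u := fun _ => 1) (g := fun _ l => f (l.getD 0 0))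
    (Primrec.const 1) monotone_const
    (hf.comp ((Primrec.list_getD 0).comp Primrec.snd (Primrec.const 0)).to_comp)
    fun r _ => by rw [getD_pref r one_pos]

theorem baireComputable_oddPart : BaireComputable fun r => Part.some (oddPart r) :=
  baireComputable_of_use (u := fun n => 2 * n + 2) (g := fun n l => l.getD (2 * n + 1) 0)
    (Primrec.nat_add.comp (Primrec.nat_mul.comp (Primrec.const 2) Primrec.id) (Primrec.const 2))
    (fun _ _ h => by dsimp only; omega)
    ((Primrec.list_getD 0).comp Primrec.snd
      (Primrec.succ.comp (Primrec.nat_mul.comp (Primrec.const 2) Primrec.fst))).to_comp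
    fun r n => by rw [getD_pref r (by omega), oddPart]

theorem baireComputable_oddPart_tail :
    BaireComputable fun r => Part.some fun n => oddPart r (n + 1) :=
  baireComputable_of_use (u := fun n => 2 * n + 4) (g := fun n l => l.getD (2 * n + 3) 0)
    (Primrec.nat_add.comp (Primrec.nat_mul.comp (Primrec.const 2) Primrec.id) (Primrec.const 4))
    (fun _ _ h => by dsimp only; omega)
    ((Primrec.list_getD 0).comp Primrec.snd
      (Primrec.nat_add.comp (Primrec.nat_mul.comp (Primrec.const 2) Primrec.fst)
        (Primrec.const 3))).to_comp
    fun r n => by rw [getD_pref r (by omega), oddPart, show 2 * (n + 1) + 1 = 2 * n + 3 by ring]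

theorem baireComputable_head_mod_div_two :
    BaireComputable fun r => Part.some fun i => if i = 0 then r 0 % 2 else r 0 / 2 := by
  have hhead : Primrec fun x : ℕ × List ℕ => x.2.getD 0 0 :=
    (Primrec.list_getD 0).comp Primrec.snd (Primrec.const 0)
  exact baireComputable_of_use (u := fun _ => 1)
    (g := fun i l => if i = 0 then l.getD 0 0 % 2 else l.getD 0 0 / 2)
    (Primrec.const 1) monotone_const
    (Primrec.ite (Primrec.eq.comp Primrec.fst (Primrec.const 0))
      (Primrec.nat_mod.comp hhead (Primrec.const 2))
      (Primrec.nat_div.comp hhead (Primrec.const 2))).to_comp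
    fun r _ => by rw [getD_pref r one_pos]

theorem baireComputable_const_two_mul_add :
    BaireComputable fun r => Part.some fun _ => 2 * r 1 + r 0 :=
  baireComputable_of_use (u := fun _ => 2) (g := fun _ l => 2 * l.getD 1 0 + l.getD 0 0)
    (Primrec.const 2) monotone_const
    (Primrec.nat_add.comp
      (Primrec.nat_mul.comp (Primrec.const 2)
        ((Primrec.list_getD 0).comp Primrec.snd (Primrec.const 1)))
      ((Primrec.list_getD 0).comp Primrec.snd (Primrec.const 0))).to_comp
    fun r _ => by rw [getD_pref r one_lt_two, getD_pref r two_pos]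

theorem baireComputable_head_cons_oddPart :
    BaireComputable fun r => Part.some fun n => if n = 0 then r 0 else oddPart r (n - 1) :=
  baireComputable_of_use (u := fun n => 2 * n + 1)
    (g := fun n l => if n = 0 then l.getD 0 0 else l.getD (2 * n - 1) 0)
    (Primrec.succ.comp (Primrec.nat_mul.comp (Primrec.const 2) Primrec.id))
    (fun _ _ h => by dsimp only; omega)
    (Primrec.ite (Primrec.eq.comp Primrec.fst (Primrec.const 0))
      ((Primrec.list_getD 0).comp Primrec.snd (Primrec.const 0))
      ((Primrec.list_getD 0).comp Primrec.snd
        (Primrec.nat_sub.comp (Primrec.nat_mul.comp (Primrec.const 2) Primrec.fst)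
          (Primrec.const 1)))).to_comp
    fun r n => by
      split_ifs
      · rw [getD_pref r (by omega)]
      · rw [getD_pref r (by omega), oddPart, show 2 * (n - 1) + 1 = 2 * n - 1 by omega]

end ComputableMaps

section Reductions

variable {p q : ℕ → ℕ}

theorem wred_mProblem_of_manyOneReducible {A B : Set ℕ} (h : (· ∈ A) ≤₀ (· ∈ B)) :
    WRed repNat (pqRep p q) repNat (pqRep p q) (mProblem p q A) (mProblem p q B) := by
  obtain ⟨f, hf, hAB⟩ := h
  refine wred_of_total (baireComputable_const_head hf) baireComputable_oddPart
    fun r n hn _ => ⟨f n, by rw [mem_repNat_iff.mp hn, mem_repNat_iff], mProblem_nonempty B _,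
      fun t ht => ?_⟩
  rw [exists_mem_pqRep_mem_mProblem_iff] at ht ⊢
  rw [oddPart_pairB, ht]
  simp only [← show n ∈ A ↔ f n ∈ B from hAB n]

theorem manyOneReducible_of_wred_mProblem (hpq : ¬ TRed p q ∧ ¬ TRed q p) {A B : Set ℕ}
    (h : WRed repNat (pqRep p q) repNat (pqRep p q) (mProblem p q A) (mProblem p q B)) :
    (· ∈ A) ≤₀ (· ∈ B) := by
  obtain ⟨H, K, hH, hK, hred⟩ := h
  obtain ⟨F, hF, hKF⟩ := hK.exists_partrec_const
  have hne : p ≠ q := fun h => hpq.1 (h ▸ tred_refl p)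
  refine manyOneReducible_of_partrec (F := fun n => F n 0)
    (hF.comp Computable.id (Computable.const 0)) fun n => ?_
  obtain ⟨z, hz, y, hy, hyA⟩ := hred _ (realizes_mProblem B) (fun _ => n) n (Part.mem_some n)
    (mProblem_nonempty A n)
  simp only [Part.mem_bind_iff, Part.mem_some_iff] at hz
  obtain ⟨r, hr, _, rfl, hz⟩ := hz
  refine ⟨r 0, hKF n r hr 0, ?_⟩
  have hzA : z = if n ∈ A then p else q := exists_mem_pqRep_mem_mProblem_iff.mp ⟨y, hy, hyA⟩
  have hzB : z = if r 0 ∈ B then p else q := eq_of_mem_pairB_of_incomparable hpq hH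
    (Computable.const n) (ite_eq_or_eq _ _ _) (hzA ▸ ite_eq_or_eq _ _ _) hz
  rw [hzA] at hzB
  by_cases hA : n ∈ A <;> by_cases hB : r 0 ∈ B <;> simp_all [hne.symm]

theorem wred_mJoin_coprodProblem (A B : Set ℕ) :
    WRed repNat (pqRep p q) (sumRep repNat repNat) (sumRep (pqRep p q) (pqRep p q))
      (mProblem p q (mJoin A B)) (coprodProblem (mProblem p q A) (mProblem p q B)) := by
  refine wred_of_total baireComputable_head_mod_div_two baireComputable_oddPart_tail
    fun r n hn _ => ⟨Equiv.natSumNatEquivNat.symm n, ?_,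
      coprodProblem_nonempty (mProblem_nonempty A) (mProblem_nonempty B) _, fun t ht => ?_⟩
  · obtain ⟨x, hx⟩ := Equiv.natSumNatEquivNat.surjective (r 0)
    rw [mem_repNat_iff.mp hn, ← hx, Equiv.symm_apply_apply, mem_sumRep_repNat_iff]
    cases x <;> simp [Nat.mul_add_div]
  · rw [exists_mem_sumRep_mem_coprodProblem_iff] at ht
    rw [exists_mem_pqRep_mem_mProblem_iff, ← Equiv.apply_symm_apply Equiv.natSumNatEquivNat n,
      mem_mJoin_natSumNatEquivNat, ← ht.2, oddPart_pairB]

theorem wred_coprodProblem_mJoin (A B : Set ℕ) :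
    WRed (sumRep repNat repNat) (sumRep (pqRep p q) (pqRep p q)) repNat (pqRep p q)
      (coprodProblem (mProblem p q A) (mProblem p q B)) (mProblem p q (mJoin A B)) := by
  refine wred_of_total baireComputable_const_two_mul_add baireComputable_head_cons_oddPart
    fun s x hx _ => ⟨Equiv.natSumNatEquivNat x, ?_, mProblem_nonempty _ _, fun t ht => ?_⟩
  · rw [mem_repNat_iff]
    rw [mem_sumRep_repNat_iff] at hx
    cases x <;> simp at hx ⊢ <;> omega
  · rw [exists_mem_pqRep_mem_mProblem_iff, mem_mJoin_natSumNatEquivNat] at ht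
    rw [exists_mem_sumRep_mem_coprodProblem_iff, ← ht, oddPart_pairB]
    exact ⟨by simpa [pairB] using (mem_sumRep_repNat_iff.mp hx).1, rfl⟩

end Reductions

/-- the many-one semilattice embeds into the Weihrauch degrees. -/
theorem many_one_embedding (p q : ℕ → ℕ) (hpq : ¬ TRed p q ∧ ¬ TRed q p)
    (A B : Set ℕ) :
    ((fun n => n ∈ A) ≤₀ (fun n => n ∈ B) ↔
      WRed repNat (pqRep p q) repNat (pqRep p q) (mProblem p q A) (mProblem p q B)) ∧
    WEquiv repNat (pqRep p q) (sumRep repNat repNat)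
      (sumRep (pqRep p q) (pqRep p q))
      (mProblem p q (mJoin A B))
      (coprodProblem (mProblem p q A) (mProblem p q B)) :=
  ⟨⟨wred_mProblem_of_manyOneReducible, manyOneReducible_of_wred_mProblem hpq⟩,
    wred_mJoin_coprodProblem A B, wred_coprodProblem_mJoin A B⟩
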